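/- Let B → A be a continuous homomorphism of preadic rings and Ω̂¹_{A/B} the completed module of differentials. Then A is formally unramified over B (for the adic topologies) if and only if Ω̂¹_{A/B} = 0. -/

import Mathlib

universe uB uA uC

/-- A continuous homomorphism `f : B → A` of preadic rings (with ideals of definition `K`, `J`)
is *formally smooth* if for every discrete ring `C`, every continuous homomorphism `B → C`
(i.e. one killing some power of `K`), and every square-zero ideal `I ⊆ C`, every continuous
`B`-algebra homomorphism `A → C/I` lifts to a continuous `B`-algebra homomorphism `A → C`. -/
def IsFormallySmoothPreadic {B : Type uB} {A : Type uA} [CommRing B] [CommRing A] (f : B →+* A)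
    (K : Ideal B) (J : Ideal A) : Prop :=
  ∀ (C : Type uC) [CommRing C] (φ : B →+* C), (∃ m : ℕ, K ^ m ≤ RingHom.ker φ) →
    ∀ I : Ideal C, I ^ 2 = ⊥ →
      ∀ u : A →+* C ⧸ I, u.comp f = (Ideal.Quotient.mk I).comp φ →
        (∃ m : ℕ, J ^ m ≤ RingHom.ker u) →
        ∃ v : A →+* C, v.comp f = φ ∧ (Ideal.Quotient.mk I).comp v = u ∧
          ∃ m : ℕ, J ^ m ≤ RingHom.ker v

/-- A continuous homomorphism `f : B → A` of preadic rings (with ideals of definition `K`, `J`)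
is *formally unramified* if for every discrete ring `C`, every continuous homomorphism `B → C`,
and every square-zero ideal `I ⊆ C`, any two continuous `B`-algebra homomorphisms `A → C`
inducing the same map `A → C/I` coincide. -/
def IsFormallyUnramifiedPreadic {B : Type uB} {A : Type uA} [CommRing B] [CommRing A]
    (f : B →+* A) (K : Ideal B) (J : Ideal A) : Prop :=
  ∀ (C : Type uC) [CommRing C] (φ : B →+* C), (∃ m : ℕ, K ^ m ≤ RingHom.ker φ) →
    ∀ I : Ideal C, I ^ 2 = ⊥ →
      ∀ v w : A →+* C, v.comp f = φ → w.comp f = φ →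
        (∃ m : ℕ, J ^ m ≤ RingHom.ker v) → (∃ m : ℕ, J ^ m ≤ RingHom.ker w) →
        (Ideal.Quotient.mk I).comp v = (Ideal.Quotient.mk I).comp w → v = w

/-- A continuous homomorphism of preadic rings is *formally étale* if it is both formally
smooth and formally unramified, i.e. the continuous lifting against square-zero extensions of
discrete topological algebras is bijective. -/
def IsFormallyEtalePreadic {B : Type uB} {A : Type uA} [CommRing B] [CommRing A] (f : B →+* A)
    (K : Ideal B) (J : Ideal A) : Prop :=
  IsFormallySmoothPreadic.{uB, uA, uC} f K J ∧ IsFormallyUnramifiedPreadic.{uB, uA, uC} f K J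

set_option maxHeartbeats 1000000
set_option synthInstance.maxHeartbeats 400000

lemma D_mem_pow_smul {B : Type uB} {A : Type uA} [CommRing B] [CommRing A] [Algebra B A]
    (J : Ideal A) (n : ℕ) {a : A} (ha : a ∈ J ^ (n + 1)) :
    KaehlerDifferential.D B A a ∈ (J ^ n • ⊤ : Submodule A (KaehlerDifferential B A)) := by
  induction n generalizing a with
  | zero => simp
  | succ n ih =>
    have ha' : a ∈ J ^ (n + 1) * J := by rwa [← pow_succ]
    refine Submodule.mul_induction_on ha' (fun x hx y hy => ?_) (fun x y hx hy => ?_)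
    · rw [Derivation.leibniz]
      refine Submodule.add_mem _ ?_ ?_
      · exact Submodule.smul_mem_smul hx Submodule.mem_top
      · have : (J ^ (n + 1) • ⊤ : Submodule A (KaehlerDifferential B A)) =
            J • (J ^ n • ⊤ : Submodule A (KaehlerDifferential B A)) := by
          rw [← Submodule.smul_assoc, smul_eq_mul, ← pow_succ']
        rw [this]
        exact Submodule.smul_mem_smul hy (ih hx)
    · simp only [map_add]
      exact Submodule.add_mem _ hx hy


open TrivSqZeroExt in
lemma auxForwardDir {B : Type uB} {A : Type uA} [CommRing B] [CommRing A] [Algebra B A]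
    (K : Ideal B) (J : Ideal A) (hcont : K.map (algebraMap B A) ≤ J)
    (h : IsFormallyUnramifiedPreadic.{uB, uA, uA} (algebraMap B A) K J) (n : ℕ) :
    (J ^ n • ⊤ : Submodule A (KaehlerDifferential B A)) = ⊤ := by
  set Ω := KaehlerDifferential B A with hΩ
  set R' := A ⧸ (J ^ n) with hR'
  set N := Ω ⧸ (J ^ n • ⊤ : Submodule A Ω) with hN
  letI : Module R'ᵐᵒᵖ N := Module.compHom N ((RingHom.id R').fromOpposite mul_comm)
  haveI : IsCentralScalar R' N := ⟨fun r m => rfl⟩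
  haveI : SMulCommClass R' R'ᵐᵒᵖ N := ⟨fun r r' m => by
    show r • (MulOpposite.unop r') • m = (MulOpposite.unop r') • r • m
    rw [smul_smul, smul_smul, mul_comm]⟩
  let C := TrivSqZeroExt R' N
  -- the two ring homs A → C
  let v : A →+* C :=
    { toFun := fun a => ⟨Ideal.Quotient.mk (J ^ n) a,
        Submodule.Quotient.mk (KaehlerDifferential.D B A a)⟩
      map_one' := by
        refine TrivSqZeroExt.ext rfl ?_
        simp [Derivation.map_one_eq_zero]
      map_mul' := fun a b => by
        refine TrivSqZeroExt.ext ?_ ?_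
        · rfl
        · show Submodule.Quotient.mk (KaehlerDifferential.D B A (a * b)) =
            (Ideal.Quotient.mk (J ^ n) a) • Submodule.Quotient.mk (KaehlerDifferential.D B A b) +
            MulOpposite.op (Ideal.Quotient.mk (J ^ n) b) •
              Submodule.Quotient.mk (KaehlerDifferential.D B A a)
          have hop : ∀ (r : A) (m : N), MulOpposite.op (Ideal.Quotient.mk (J ^ n) r) • m =
              (Ideal.Quotient.mk (J ^ n) r) • m := fun r m => rfl
          rw [hop, Derivation.leibniz,
            Module.Quotient.mk_smul_mk, Module.Quotient.mk_smul_mk,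
            ← Submodule.Quotient.mk_add]
      map_zero' := by
        refine TrivSqZeroExt.ext rfl ?_
        simp
      map_add' := fun a b => by
        refine TrivSqZeroExt.ext rfl ?_
        show Submodule.Quotient.mk (KaehlerDifferential.D B A (a + b)) =
          Submodule.Quotient.mk (KaehlerDifferential.D B A a) +
            Submodule.Quotient.mk (KaehlerDifferential.D B A b)
        rw [map_add, Submodule.Quotient.mk_add] }
  let w : A →+* C := (TrivSqZeroExt.inlHom R' N).comp (Ideal.Quotient.mk (J ^ n))
  let φ : B →+* C := v.comp (algebraMap B A)
  have hmap : ∀ m : ℕ, (K ^ m).map (algebraMap B A) ≤ J ^ m := fun m => by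
    rw [Ideal.map_pow]
    exact Ideal.pow_right_mono hcont m
  have hv : J ^ (n + 1) ≤ RingHom.ker v := fun a ha => by
    refine TrivSqZeroExt.ext ?_ ?_
    · show Ideal.Quotient.mk (J ^ n) a = 0
      rw [Ideal.Quotient.eq_zero_iff_mem]
      exact Ideal.pow_le_pow_right (Nat.le_succ n) ha
    · show Submodule.Quotient.mk (KaehlerDifferential.D B A a) = (0 : N)
      rw [Submodule.Quotient.mk_eq_zero]
      exact D_mem_pow_smul J n ha
  have hw : J ^ n ≤ RingHom.ker w := fun a ha => by
    show TrivSqZeroExt.inl (M := N) (Ideal.Quotient.mk (J ^ n) a) = 0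
    rw [Ideal.Quotient.eq_zero_iff_mem.mpr ha]
    exact TrivSqZeroExt.inl_zero N
  have hφ : K ^ (n + 1) ≤ RingHom.ker φ := fun k hk => by
    show v (algebraMap B A k) = 0
    exact hv (hmap (n + 1) (Ideal.mem_map_of_mem _ hk))
  -- the square-zero ideal
  let I : Ideal C := RingHom.ker ((TrivSqZeroExt.fstHom R' R' N : C →ₐ[R'] R') : C →+* R')
  have hmemI : ∀ x : C, x ∈ I ↔ x.fst = 0 := fun x => by
    rw [RingHom.mem_ker]; exact Iff.rfl
  have hI : I ^ 2 = ⊥ := by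
    rw [pow_two, eq_bot_iff]
    refine Ideal.mul_le.mpr fun x hx y hy => ?_
    have hx0 : x.fst = 0 := (hmemI x).mp hx
    have hy0 : y.fst = 0 := (hmemI y).mp hy
    have : x * y = 0 := by
      refine TrivSqZeroExt.ext ?_ ?_
      · rw [fst_mul, hx0, zero_mul]; rfl
      · rw [snd_mul, hx0, hy0]
        show (0 : R') • y.snd + MulOpposite.op (0 : R') • x.snd = 0
        have hop : ∀ m : N, MulOpposite.op (0 : R') • m = (0 : R') • m := fun m => rfl
        rw [hop, zero_smul, zero_smul, add_zero]
    rw [this]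
    exact Ideal.zero_mem ⊥
  have hvw : (Ideal.Quotient.mk I).comp v = (Ideal.Quotient.mk I).comp w := by
    ext a
    show Ideal.Quotient.mk I (v a) = Ideal.Quotient.mk I (w a)
    rw [Ideal.Quotient.eq, hmemI, TrivSqZeroExt.fst_sub]
    exact sub_eq_zero_of_eq rfl
  have hwf : w.comp (algebraMap B A) = φ := by
    refine RingHom.ext fun b => TrivSqZeroExt.ext rfl ?_
    show (0 : N) = Submodule.Quotient.mk (KaehlerDifferential.D B A (algebraMap B A b))
    rw [Derivation.map_algebraMap]
    exact ((Submodule.Quotient.mk_eq_zero _).mpr (Submodule.zero_mem _)).symm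
  have := h C φ ⟨n + 1, hφ⟩ I hI v w rfl hwf ⟨n + 1, hv⟩ ⟨n, hw⟩ hvw
  -- extract: D a ∈ J^n • ⊤ for all a
  have hD : ∀ a : A, KaehlerDifferential.D B A a ∈ (J ^ n • ⊤ : Submodule A Ω) := fun a => by
    have h2 : (v a).snd = (w a).snd := by rw [this]
    have : Submodule.Quotient.mk (KaehlerDifferential.D B A a) = (0 : N) := h2
    rwa [Submodule.Quotient.mk_eq_zero] at this
  exact eq_top_iff.mpr ((KaehlerDifferential.span_range_derivation B A).symm.trans_le
    (Submodule.span_le.mpr (by rintro ω ⟨a, rfl⟩; exact hD a)))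

lemma auxConverseDir {B : Type uB} {A : Type uA} [CommRing B] [CommRing A] [Algebra B A]
    (K : Ideal B) (J : Ideal A)
    (h : ∀ n : ℕ, (J ^ n • ⊤ : Submodule A (KaehlerDifferential B A)) = ⊤) :
    IsFormallyUnramifiedPreadic.{uB, uA, uA} (algebraMap B A) K J := by
  intro C _ φ hφ I hI v w hvf hwf hv hw heq
  obtain ⟨m, hm⟩ := hv
  letI : Algebra A C := v.toAlgebra
  letI : Algebra B C := (v.comp (algebraMap B A)).toAlgebra
  haveI : IsScalarTower B A C := IsScalarTower.of_algebraMap_eq fun b => rfl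
  have hsub : ∀ a : A, v a - w a ∈ I := fun a => by
    rw [← Ideal.Quotient.eq]
    exact congrFun (congrArg DFunLike.coe heq) a
  have hzero : ∀ a b : A, (v a - w a) * (v b - w b) = 0 := fun a b => by
    rw [← Ideal.mem_bot, ← hI, pow_two]
    exact Ideal.mul_mem_mul (hsub a) (hsub b)
  let Dv : Derivation B A C :=
    { toFun := fun a => v a - w a
      map_add' := fun a b => by simp only [map_add]; ring
      map_smul' := fun b a => by
        simp only [RingHom.id_apply, Algebra.smul_def]
        have h1 : algebraMap B C b = v (algebraMap B A b) := rfl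
        have h2 : w (algebraMap B A b) = v (algebraMap B A b) := by
          rw [show w (algebraMap B A b) = φ b from congrFun (congrArg DFunLike.coe hwf) b,
            show v (algebraMap B A b) = φ b from congrFun (congrArg DFunLike.coe hvf) b]
        rw [map_mul, map_mul, h1, h2]
        ring
      map_one_eq_zero' := by simp
      leibniz' := fun a b => by
        have key := hzero a b
        show v (a * b) - w (a * b) = a • (v b - w b) + b • (v a - w a)
        have hs : ∀ (x : A) (c : C), x • c = v x * c := fun x c => rfl
        rw [hs, hs, map_mul, map_mul]
        linear_combination -key }
  have hL : ∀ ω : KaehlerDifferential B A, Dv.liftKaehlerDifferential ω = 0 := by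
    intro ω
    have hω : ω ∈ (J ^ m • ⊤ : Submodule A (KaehlerDifferential B A)) := (h m).symm ▸
      Submodule.mem_top
    refine Submodule.smul_induction_on hω (fun x hx ω' _ => ?_) (fun x y hx hy => ?_)
    · rw [map_smul]
      have : v x = 0 := hm hx
      show v x * _ = 0
      rw [this, zero_mul]
    · rw [map_add, hx, hy, add_zero]
  ext a
  have := hL (KaehlerDifferential.D B A a)
  rw [Derivation.liftKaehlerDifferential_comp_D] at this
  exact sub_eq_zero.mp this


/-- Let `B → A` be a continuous homomorphism of preadic rings with ideals of definition `K ⊆ B`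
and `J ⊆ A` (so `K·A ⊆ J`), and let `Ω̂¹_{A/B}` be the completed module of differentials, i.e.
the `J`-adic completion of the Kähler differentials. Then `A` is formally unramified over `B`
for the adic topologies if and only if `Ω̂¹_{A/B} = 0`. -/
theorem isFormallyUnramifiedPreadic_iff_completed_differentials_eq_zero {B : Type uB}
    {A : Type uA} [CommRing B] [CommRing A] [Algebra B A] (K : Ideal B) (J : Ideal A)
    (hcont : K.map (algebraMap B A) ≤ J) :
    IsFormallyUnramifiedPreadic.{uB, uA, uA} (algebraMap B A) K J ↔
      Subsingleton (AdicCompletion J (KaehlerDifferential B A)) := by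
  constructor
  · intro h
    constructor
    intro x y
    ext n
    haveI : Subsingleton
        (KaehlerDifferential B A ⧸ (J ^ n • ⊤ : Submodule A (KaehlerDifferential B A))) := by
      rw [Submodule.Quotient.subsingleton_iff]
      exact auxForwardDir K J hcont h n
    exact Subsingleton.elim _ _
  · intro hsub
    apply auxConverseDir K J
    intro n
    rw [eq_top_iff]
    intro ω _
    have h0 : AdicCompletion.of J (KaehlerDifferential B A) ω = 0 := Subsingleton.elim _ _
    have h1 : (Submodule.Quotient.mk ω :
        KaehlerDifferential B A ⧸ (J ^ n • ⊤ : Submodule A (KaehlerDifferential B A))) = 0 :=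
      congrFun (congrArg Subtype.val h0) n
    exact (Submodule.Quotient.mk_eq_zero _).mp h1
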